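/- Let K₀ ∈ (-1, 1) and for fixed L define S_ℓ = (S_{ℓ-1} + σ̂(S_{ℓ-1})/L²)/(1+1/L²) with S₀ = K₀, P_{ℓ+1} = Π_{i=ℓ}^{L-1} (1+σ̂'(S_i)/L²)/(1+1/L²) for ℓ < L and P_{L+1} = 1, and Ω̄_L = (1/(2L))·Σ_{ℓ=1}^{L} P_{ℓ+1}·(σ̂(S_{ℓ-1}) + S_{ℓ-1}·σ̂'(S_{ℓ-1})). Then there is a constant C (depending on K₀) such that |Ω̄_L − (1/2)(σ̂(K₀) + K₀·σ̂'(K₀))| ≤ C/L for all L ≥ 1. -/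

import Mathlib

/-!
A residual step moves `S` by `(σ̂(S) - S)/(L² + 1)`, so `S_ℓ` stays within `2/L` of `K₀` for
`ℓ ≤ L`; every factor of `P` lies in `[1 - 1/L², 1]`, so Bernoulli's inequality puts `P` in
`[1 - 1/L, 1]`. With `F(ρ) = σ̂(ρ) + ρ σ̂'(ρ)`, whose derivative `2σ̂'(ρ) + ρ/(π√(1 - ρ²))` is
bounded on compact subintervals of `(-1, 1)`, every summand `P_{ℓ+1} F(S_{ℓ-1})` of the average
`Ω̄_L` is then within `O(1/L)` of `F(K₀)`, as soon as `2/L` is smaller than the gap between `|K₀|`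
and `1`. For the finitely many remaining `L` the crude bound `|F| ≤ 2` suffices.
-/

open Real Finset

/-- Dual activation of the normalized ReLU. -/
noncomputable def hatSigma (ρ : ℝ) : ℝ :=
  (Real.sqrt (1 - ρ ^ 2) + (π - Real.arccos ρ) * ρ) / π

/-- Derivative of the dual activation. -/
noncomputable def hatSigma' (ρ : ℝ) : ℝ := (π - Real.arccos ρ) / π

/-- S_ℓ for the depth-L ResNet with α = 1/L: S₀ = K₀,
S_ℓ = (S_{ℓ-1} + σ̂(S_{ℓ-1})/L²)/(1 + 1/L²). -/
noncomputable def resS (K₀ : ℝ) (L : ℕ) : ℕ → ℝ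
  | 0 => K₀
  | n + 1 => (resS K₀ L n + hatSigma (resS K₀ L n) / (L : ℝ) ^ 2) / (1 + 1 / (L : ℝ) ^ 2)

/-- P_{ℓ+1,L} = ∏_{i=ℓ}^{L-1} (1 + σ̂'(S_i)/L²)/(1 + 1/L²); the empty product
(ℓ = L) gives P_{L+1,L} = 1. -/
noncomputable def resP (K₀ : ℝ) (L ℓ : ℕ) : ℝ :=
  ∏ i ∈ Finset.Ico ℓ L, (1 + hatSigma' (resS K₀ L i) / (L : ℝ) ^ 2) / (1 + 1 / (L : ℝ) ^ 2)

/-- Normalized NTK of the depth-L ResNet at inner product K₀: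
Ω̄_L = (1/(2L))·Σ_{ℓ=1}^{L} P_{ℓ+1,L}·(σ̂(S_{ℓ-1}) + S_{ℓ-1}σ̂'(S_{ℓ-1})). -/
noncomputable def resOmega (K₀ : ℝ) (L : ℕ) : ℝ :=
  (1 / (2 * (L : ℝ))) * ∑ ℓ ∈ Finset.Icc 1 L,
    resP K₀ L ℓ *
      (hatSigma (resS K₀ L (ℓ - 1)) + resS K₀ L (ℓ - 1) * hatSigma' (resS K₀ L (ℓ - 1)))

open Filter

lemma hatSigma'_mem_Icc (ρ : ℝ) : hatSigma' ρ ∈ Set.Icc 0 1 := by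
  have h0 := arccos_nonneg ρ
  have hπ := arccos_le_pi ρ
  rw [hatSigma', Set.mem_Icc, le_div_iff₀ pi_pos, div_le_one pi_pos]
  constructor <;> linarith

lemma hatSigma_mem_Icc {ρ : ℝ} (hρ : ρ ∈ Set.Icc (-1) 1) : hatSigma ρ ∈ Set.Icc (-1) 1 := by
  obtain ⟨h1, h2⟩ := hρ
  have h0 := arccos_nonneg ρ
  have hπ := arccos_le_pi ρ
  have hsqrt_nonneg := sqrt_nonneg (1 - ρ ^ 2)
  have hsqrt_le : √(1 - ρ ^ 2) ≤ arccos ρ := sin_arccos ρ ▸ sin_le h0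
  rw [hatSigma, Set.mem_Icc, le_div_iff₀ pi_pos, div_le_one pi_pos]
  constructor <;> nlinarith

/-- `Ω̄₁ = ntkTerm / 2` is the depth-one normalized NTK; `Ω̄_L` averages `P · ntkTerm (S)`. -/
noncomputable def ntkTerm (ρ : ℝ) : ℝ := hatSigma ρ + ρ * hatSigma' ρ

lemma abs_ntkTerm_le_two {ρ : ℝ} (hρ : ρ ∈ Set.Icc (-1) 1) : |ntkTerm ρ| ≤ 2 := by
  obtain ⟨hσ1, hσ2⟩ := hatSigma_mem_Icc hρ
  obtain ⟨hσ'0, hσ'1⟩ := hatSigma'_mem_Icc ρ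
  obtain ⟨h1, h2⟩ := hρ
  rw [ntkTerm, abs_le]
  constructor <;> nlinarith

lemma hasDerivAt_pi_sub_arccos {ρ : ℝ} (h1 : -1 < ρ) (h2 : ρ < 1) :
    HasDerivAt (fun x => π - arccos x) (1 / √(1 - ρ ^ 2)) ρ := by
  simpa using (hasDerivAt_arccos h1.ne' h2.ne).const_sub π

lemma hasDerivAt_hatSigma' {ρ : ℝ} (h1 : -1 < ρ) (h2 : ρ < 1) :
    HasDerivAt hatSigma' (1 / √(1 - ρ ^ 2) / π) ρ :=
  (hasDerivAt_pi_sub_arccos h1 h2).div_const π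

lemma hasDerivAt_hatSigma {ρ : ℝ} (h1 : -1 < ρ) (h2 : ρ < 1) :
    HasDerivAt hatSigma (hatSigma' ρ) ρ := by
  have hpos : 0 < 1 - ρ ^ 2 := by nlinarith
  have hsqrt : HasDerivAt (fun x => √(1 - x ^ 2)) (-(2 * ρ) / (2 * √(1 - ρ ^ 2))) ρ := by
    have hpoly : HasDerivAt (fun x : ℝ => 1 - x ^ 2) (-(2 * ρ)) ρ := by
      simpa using (hasDerivAt_pow 2 ρ).const_sub 1
    exact hpoly.sqrt hpos.ne'
  have hsqrt_ne : √(1 - ρ ^ 2) ≠ 0 := (sqrt_pos.2 hpos).ne'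
  refine ((hsqrt.add ((hasDerivAt_pi_sub_arccos h1 h2).mul (hasDerivAt_id ρ))).div_const π
    |>.congr_deriv ?_)
  simp only [hatSigma', id]
  field_simp
  ring

lemma hasDerivAt_ntkTerm {ρ : ℝ} (h1 : -1 < ρ) (h2 : ρ < 1) :
    HasDerivAt ntkTerm (2 * hatSigma' ρ + ρ / (π * √(1 - ρ ^ 2))) ρ :=
  (hasDerivAt_hatSigma h1 h2).add ((hasDerivAt_id ρ).mul (hasDerivAt_hatSigma' h1 h2))
    |>.congr_deriv (by simp only [id]; ring)

lemma abs_deriv_ntkTerm_le {c ρ : ℝ} (hc : c < 1) (hρ : ρ ∈ Set.Icc (-c) c) :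
    |2 * hatSigma' ρ + ρ / (π * √(1 - ρ ^ 2))| ≤ 2 + 1 / √(1 - c ^ 2) := by
  obtain ⟨hσ'0, hσ'1⟩ := hatSigma'_mem_Icc ρ
  obtain ⟨hρ1, hρ2⟩ := hρ
  have hc_pos : 0 < √(1 - c ^ 2) := sqrt_pos.2 (by nlinarith)
  have hsqrt_le : √(1 - c ^ 2) ≤ √(1 - ρ ^ 2) := sqrt_le_sqrt (by nlinarith)
  have habs_ρ : |ρ| ≤ 1 := abs_le.2 ⟨by linarith, by linarith⟩
  have hquot : |ρ / (π * √(1 - ρ ^ 2))| ≤ 1 / √(1 - c ^ 2) := by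
    have hden : √(1 - c ^ 2) ≤ π * √(1 - ρ ^ 2) := by
      nlinarith [pi_gt_three]
    have hden_pos : 0 < π * √(1 - ρ ^ 2) := mul_pos pi_pos (hc_pos.trans_le hsqrt_le)
    rw [abs_div, abs_of_pos hden_pos, div_le_div_iff₀ hden_pos hc_pos]
    nlinarith [abs_nonneg ρ]
  calc _ ≤ |2 * hatSigma' ρ| + |ρ / (π * √(1 - ρ ^ 2))| := abs_add_le _ _
    _ ≤ 2 + 1 / √(1 - c ^ 2) := by
        rw [abs_of_nonneg (by linarith)]
        linarith

lemma abs_ntkTerm_sub_le {c x y : ℝ} (hc : c < 1) (hx : x ∈ Set.Icc (-c) c)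
    (hy : y ∈ Set.Icc (-c) c) :
    |ntkTerm y - ntkTerm x| ≤ (2 + 1 / √(1 - c ^ 2)) * |y - x| := by
  have hderiv : ∀ ρ ∈ Set.Icc (-c) c, HasDerivWithinAt ntkTerm
      (2 * hatSigma' ρ + ρ / (π * √(1 - ρ ^ 2))) (Set.Icc (-c) c) ρ :=
    fun ρ hρ => (hasDerivAt_ntkTerm (by linarith [hρ.1]) (by linarith [hρ.2])).hasDerivWithinAt
  exact (convex_Icc _ _).norm_image_sub_le_of_norm_hasDerivWithin_le hderiv
    (fun ρ hρ => abs_deriv_ntkTerm_le hc hρ) hx hy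

section Recursions

variable {K₀ : ℝ} {L : ℕ}

lemma resS_succ_sub (hL : L ≠ 0) (n : ℕ) :
    resS K₀ L (n + 1) - resS K₀ L n =
      (hatSigma (resS K₀ L n) - resS K₀ L n) / ((L : ℝ) ^ 2 + 1) := by
  have : (L : ℝ) ≠ 0 := Nat.cast_ne_zero.2 hL
  rw [resS]
  field_simp
  ring

lemma resS_mem_Icc (hK₀ : K₀ ∈ Set.Icc (-1) 1) (hL : L ≠ 0) (n : ℕ) :
    resS K₀ L n ∈ Set.Icc (-1) 1 := by
  induction n with
  | zero => exact hK₀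
  | succ n ih =>
    obtain ⟨hσ1, hσ2⟩ := hatSigma_mem_Icc ih
    obtain ⟨hS1, hS2⟩ := ih
    have hstep := resS_succ_sub (K₀ := K₀) hL n
    set t := 1 / ((L : ℝ) ^ 2 + 1) with ht
    have ht0 : 0 ≤ t := by positivity
    have ht1 : t ≤ 1 := div_le_one_of_le₀ (by nlinarith) (by positivity)
    rw [div_eq_mul_one_div, ← ht] at hstep
    constructor <;> nlinarith

lemma abs_resS_sub_le (hK₀ : K₀ ∈ Set.Icc (-1) 1) (hL : L ≠ 0) (n : ℕ) :
    |resS K₀ L n - K₀| ≤ 2 * n / (L : ℝ) ^ 2 := by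
  have : (L : ℝ) ≠ 0 := Nat.cast_ne_zero.2 hL
  induction n with
  | zero => simp [resS]
  | succ n ih =>
    have hS := resS_mem_Icc hK₀ hL n
    obtain ⟨hσ1, hσ2⟩ := hatSigma_mem_Icc hS
    have hL2 : (0 : ℝ) < (L : ℝ) ^ 2 := by positivity
    have hstep : |resS K₀ L (n + 1) - resS K₀ L n| ≤ 2 / (L : ℝ) ^ 2 := by
      rw [resS_succ_sub hL, abs_div, abs_of_pos (by positivity : (0 : ℝ) < (L : ℝ) ^ 2 + 1)]
      gcongr ?_ / ?_
      · exact abs_le.2 ⟨by linarith [hS.2], by linarith [hS.1]⟩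
      · linarith
    calc |resS K₀ L (n + 1) - K₀|
        ≤ |resS K₀ L (n + 1) - resS K₀ L n| + |resS K₀ L n - K₀| := abs_sub_le _ _ _
      _ ≤ 2 / (L : ℝ) ^ 2 + 2 * n / (L : ℝ) ^ 2 := add_le_add hstep ih
      _ = 2 * ↑(n + 1) / (L : ℝ) ^ 2 := by push_cast; ring

lemma resP_factor_mem_Icc (ρ : ℝ) :
    (1 + hatSigma' ρ / (L : ℝ) ^ 2) / (1 + 1 / (L : ℝ) ^ 2) ∈
      Set.Icc (1 - 1 / (L : ℝ) ^ 2) 1 := by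
  obtain ⟨hσ'0, hσ'1⟩ := hatSigma'_mem_Icc ρ
  set t := 1 / (L : ℝ) ^ 2 with ht
  have ht0 : 0 ≤ t := by positivity
  rw [div_eq_mul_one_div _ ((L : ℝ) ^ 2), ← ht, Set.mem_Icc, le_div_iff₀ (by positivity),
    div_le_one (by positivity)]
  constructor <;> nlinarith

lemma resP_mem_Icc (hL : L ≠ 0) (ℓ : ℕ) : resP K₀ L ℓ ∈ Set.Icc (1 - 1 / (L : ℝ)) 1 := by
  have hL1 : (1 : ℝ) ≤ L := Nat.one_le_cast.2 (Nat.one_le_iff_ne_zero.2 hL)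
  set t := 1 / (L : ℝ) ^ 2 with ht
  have ht0 : 0 ≤ t := by positivity
  have ht1 : t ≤ 1 := div_le_one_of_le₀ (one_le_pow₀ hL1) (by positivity)
  have hfactor := fun i => resP_factor_mem_Icc (L := L) (resS K₀ L i)
  have hfactor_nonneg : 0 ≤ 1 - t := by linarith
  constructor
  · have hcard : ((L - ℓ : ℕ) : ℝ) * t ≤ 1 / L := by
      calc ((L - ℓ : ℕ) : ℝ) * t ≤ L * t := by gcongr; exact_mod_cast Nat.sub_le L ℓ
        _ = 1 / L := by rw [ht]; field_simp
    calc 1 - 1 / (L : ℝ) ≤ 1 + ((L - ℓ : ℕ) : ℝ) * (-t) := by linarith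
      _ ≤ (1 + -t) ^ (L - ℓ) := one_add_mul_le_pow (by linarith) _
      _ = ∏ _i ∈ Finset.Ico ℓ L, (1 - t) := by rw [prod_const, Nat.card_Ico, ← sub_eq_add_neg]
      _ ≤ resP K₀ L ℓ := prod_le_prod (fun _ _ => hfactor_nonneg) (fun i _ => (hfactor i).1)
  · exact prod_le_one (fun i _ => hfactor_nonneg.trans (hfactor i).1) (fun i _ => (hfactor i).2)

end Recursions

lemma abs_sum_div_card_sub_le {ι : Type*} {s : Finset ι} (hs : s.Nonempty) {a : ι → ℝ}
    {b ε : ℝ} (h : ∀ i ∈ s, |a i - b| ≤ ε) : |(∑ i ∈ s, a i) / #s - b| ≤ ε := by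
  have hcard : (0 : ℝ) < #s := Nat.cast_pos.2 hs.card_pos
  have hsum : (∑ i ∈ s, a i) - #s * b = ∑ i ∈ s, (a i - b) := by
    rw [sum_sub_distrib, sum_const, nsmul_eq_mul]
  rw [div_sub' hcard.ne', abs_div, abs_of_pos hcard, div_le_iff₀ hcard, hsum]
  calc |∑ i ∈ s, (a i - b)| ≤ ∑ i ∈ s, |a i - b| := abs_sum_le_sum_abs _ _
    _ ≤ ∑ _i ∈ s, ε := sum_le_sum h
    _ = ε * #s := by rw [sum_const, nsmul_eq_mul, mul_comm]

lemma exists_forall_abs_le_div_of_eventually {u : ℕ → ℝ} {A B : ℝ}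
    (hB : ∀ n, 1 ≤ n → |u n| ≤ B) (hA : ∀ᶠ n in atTop, |u n| ≤ A / n) :
    ∃ C : ℝ, ∀ n : ℕ, 1 ≤ n → |u n| ≤ C / n := by
  obtain ⟨N, hN⟩ := eventually_atTop.1 hA
  have hB0 : 0 ≤ B := (abs_nonneg _).trans (hB 1 le_rfl)
  refine ⟨max A (B * N), fun n hn => ?_⟩
  have hn0 : (0 : ℝ) < n := Nat.cast_pos.2 hn
  rcases le_or_gt N n with hNn | hnN
  · exact (hN n hNn).trans (by gcongr; exact le_max_left _ _)
  · calc |u n| ≤ B := hB n hn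
      _ ≤ B * N / n := by
          rw [le_div_iff₀ hn0]
          gcongr
      _ ≤ max A (B * N) / n := by gcongr; exact le_max_right _ _

section Omega

variable {K₀ : ℝ} {L : ℕ}

lemma abs_resOmega_sub_le (hL : L ≠ 0) {ε : ℝ}
    (h : ∀ ℓ ∈ Icc 1 L, |resP K₀ L ℓ * ntkTerm (resS K₀ L (ℓ - 1)) - ntkTerm K₀| ≤ ε) :
    |resOmega K₀ L - 1 / 2 * ntkTerm K₀| ≤ ε / 2 := by
  have hcard : #(Icc 1 L) = L := by rw [Nat.card_Icc, Nat.add_sub_cancel]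
  have havg := abs_sum_div_card_sub_le (nonempty_Icc.2 (Nat.one_le_iff_ne_zero.2 hL)) h
  rw [hcard] at havg
  have heq : resOmega K₀ L - 1 / 2 * ntkTerm K₀ =
      1 / 2 * ((∑ ℓ ∈ Icc 1 L, resP K₀ L ℓ * ntkTerm (resS K₀ L (ℓ - 1))) / L - ntkTerm K₀) := by
    simp only [resOmega, ntkTerm]
    ring
  rw [heq, abs_mul, abs_of_pos one_half_pos]
  linarith

lemma abs_resP_mul_ntkTerm_sub_le_four (hK₀ : K₀ ∈ Set.Icc (-1) 1) (hL : L ≠ 0) (ℓ n : ℕ) :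
    |resP K₀ L ℓ * ntkTerm (resS K₀ L n) - ntkTerm K₀| ≤ 4 := by
  have hL1 : (1 : ℝ) ≤ L := Nat.one_le_cast.2 (Nat.one_le_iff_ne_zero.2 hL)
  obtain ⟨hP1, hP2⟩ := resP_mem_Icc (K₀ := K₀) hL ℓ
  have hP0 : 0 ≤ resP K₀ L ℓ :=
    le_trans (by rw [sub_nonneg, div_le_one (by positivity)]; exact hL1) hP1
  have hFS := abs_ntkTerm_le_two (resS_mem_Icc hK₀ hL n)
  have hFK := abs_ntkTerm_le_two hK₀
  calc _ ≤ |resP K₀ L ℓ * ntkTerm (resS K₀ L n)| + |ntkTerm K₀| := abs_sub _ _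
    _ ≤ 1 * 2 + 2 := by
        rw [abs_mul, abs_of_nonneg hP0]
        gcongr
    _ = 4 := by norm_num

lemma abs_resP_mul_ntkTerm_sub_le (hK₀ : K₀ ∈ Set.Icc (-1) 1) (hL : L ≠ 0) {c : ℝ} (hc : c < 1)
    (hK₀c : |K₀| + 2 / L ≤ c) (ℓ : ℕ) {n : ℕ} (hn : n ≤ L) :
    |resP K₀ L ℓ * ntkTerm (resS K₀ L n) - ntkTerm K₀| ≤ 2 * (3 + 1 / √(1 - c ^ 2)) / L := by
  have hL0 : (0 : ℝ) < L := Nat.cast_pos.2 (Nat.pos_of_ne_zero hL)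
  have hSK : |resS K₀ L n - K₀| ≤ 2 / L :=
    calc |resS K₀ L n - K₀| ≤ 2 * n / (L : ℝ) ^ 2 := abs_resS_sub_le hK₀ hL n
      _ ≤ 2 * L / (L : ℝ) ^ 2 := by gcongr
      _ = 2 / L := by field_simp
  have hK₀_mem : K₀ ∈ Set.Icc (-c) c := by
    have : 0 ≤ 2 / (L : ℝ) := by positivity
    exact abs_le.1 (by linarith)
  have hS_mem : resS K₀ L n ∈ Set.Icc (-c) c := by
    have := abs_sub_abs_le_abs_sub (resS K₀ L n) K₀
    exact abs_le.1 (by linarith)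
  have hP : |resP K₀ L ℓ - 1| ≤ 1 / L := by
    obtain ⟨hP1, hP2⟩ := resP_mem_Icc (K₀ := K₀) hL ℓ
    exact abs_le.2 ⟨by linarith, by linarith [one_div_pos.2 hL0]⟩
  have hFS := abs_ntkTerm_le_two (resS_mem_Icc hK₀ hL n)
  have hlip := abs_ntkTerm_sub_le hc hK₀_mem hS_mem
  set S := resS K₀ L n
  calc _ = |(resP K₀ L ℓ - 1) * ntkTerm S + (ntkTerm S - ntkTerm K₀)| := by ring_nf
    _ ≤ |resP K₀ L ℓ - 1| * |ntkTerm S| + |ntkTerm S - ntkTerm K₀| := by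
        rw [← abs_mul]; exact abs_add_le _ _
    _ ≤ 1 / L * 2 + (2 + 1 / √(1 - c ^ 2)) * (2 / L) := by
        gcongr
        exact hlip.trans (by gcongr)
    _ = 2 * (3 + 1 / √(1 - c ^ 2)) / L := by ring

end Omega

/-- O(1/L) convergence of the normalized ResNet NTK to the depth-1 NTK. -/
theorem resnet_ntk_convergence (K₀ : ℝ) (hK₀ : K₀ ∈ Set.Ioo (-1 : ℝ) 1) :
    ∃ C : ℝ, ∀ L : ℕ, 1 ≤ L →
      |resOmega K₀ L - (1 / 2) * (hatSigma K₀ + K₀ * hatSigma' K₀)| ≤ C / L := by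
  have hK₀_Icc : K₀ ∈ Set.Icc (-1) 1 := Set.Ioo_subset_Icc_self hK₀
  obtain ⟨c, hK₀c, hc⟩ := exists_between (abs_lt.2 hK₀)
  refine exists_forall_abs_le_div_of_eventually (A := 3 + 1 / √(1 - c ^ 2)) (B := 2)
    (fun L hL => ?_) ?_
  · have hL0 := Nat.one_le_iff_ne_zero.1 hL
    exact (abs_resOmega_sub_le hL0 fun ℓ _ =>
      abs_resP_mul_ntkTerm_sub_le_four hK₀_Icc hL0 ℓ (ℓ - 1)).trans_eq (by norm_num)
  · have hsmall : ∀ᶠ L : ℕ in atTop, 2 / (L : ℝ) ≤ c - |K₀| :=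
      (tendsto_const_div_atTop_nhds_zero_nat 2).eventually (eventually_le_nhds (by linarith))
    filter_upwards [hsmall, eventually_ne_atTop 0] with L hLc hL0
    refine (abs_resOmega_sub_le hL0 fun ℓ hℓ => abs_resP_mul_ntkTerm_sub_le hK₀_Icc hL0 hc
      (by linarith) ℓ ((Nat.sub_le ℓ 1).trans (mem_Icc.1 hℓ).2)).trans_eq (by ring)
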